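/- Let C be an updown category satisfying the sequential commutation condition: (DU − UD) restricted to rank i equals r_i times the identity for a sequence of scalars r_0, r_1, …. Then for any object p of rank k and any a ≥ 0: Σ_{|q|=k+a} d(p;q)·u(0̂;q) = u(0̂;p) · Π_{i=0}^{a-1} (r_0 + r_1 + ⋯ + r_{k+i}). -/
import Mathlib


/-! Core definitions: updown categories (Hoffman, "Updown categories"). -/

/-- The underlying data of a (small) category equipped with an ℕ-valued rank,
finite levels (given as `Finset`s) and a distinguished rank-0 object `zero`. -/
structure UpdownData where
  Obj : Type
  Hom : Obj → Obj → Type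
  id : ∀ p : Obj, Hom p p
  comp : ∀ {p q r : Obj}, Hom p q → Hom q r → Hom p r
  id_comp : ∀ {p q : Obj} (f : Hom p q), comp (id p) f = f
  comp_id : ∀ {p q : Obj} (f : Hom p q), comp f (id q) = f
  assoc : ∀ {p q r s : Obj} (f : Hom p q) (g : Hom q r) (h : Hom r s),
    comp (comp f g) h = comp f (comp g h)
  rank : Obj → ℕ
  level : ℕ → Finset Obj
  zero : Obj

namespace UpdownData

/-- Axioms A1–A5 of an updown category. -/
structure IsUpdownCat (C : UpdownData) : Prop where
  /-- `level n` is exactly the (finite) set of objects of rank `n` (A1). -/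
  mem_level : ∀ (n : ℕ) (p : C.Obj), p ∈ C.level n ↔ C.rank p = n
  /-- A2: `zero` is the unique rank-0 object. -/
  rank_zero : C.rank C.zero = 0
  zero_unique : ∀ p : C.Obj, C.rank p = 0 → p = C.zero
  /-- A2: there is a morphism from `zero` to every object. -/
  zero_init : ∀ p : C.Obj, Nonempty (C.Hom C.zero p)
  /-- A3: hom-sets are finite. -/
  homFinite : ∀ p q : C.Obj, Finite (C.Hom p q)
  /-- A3: `Hom p q` is empty unless `rank p < rank q` or `p = q`. -/
  hom_rank : ∀ p q : C.Obj, C.Hom p q → (C.rank p < C.rank q ∨ p = q)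
  /-- A3: every endomorphism is invertible, so `Hom p p = Aut p` is a group. -/
  aut_group : ∀ (p : C.Obj) (f : C.Hom p p),
    ∃ g : C.Hom p p, C.comp f g = C.id p ∧ C.comp g f = C.id p
  /-- A4: every morphism raising rank by more than one factors through the
  next level (hence, inductively, through all intermediate levels). -/
  factor : ∀ (p q : C.Obj) (f : C.Hom p q), C.rank p + 1 < C.rank q →
    ∃ (r : C.Obj) (g : C.Hom p r) (h : C.Hom r q),
      C.rank r = C.rank p + 1 ∧ C.comp g h = f
  /-- A5: `Aut p` acts freely on `Hom p q` by precomposition when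
  `rank q = rank p + 1`. -/
  free_pre : ∀ (p q : C.Obj), C.rank q = C.rank p + 1 →
    ∀ (α : C.Hom p p) (f : C.Hom p q), C.comp α f = f → α = C.id p
  /-- A5: `Aut q` acts freely on `Hom p q` by postcomposition when
  `rank q = rank p + 1`. -/
  free_post : ∀ (p q : C.Obj), C.rank q = C.rank p + 1 →
    ∀ (β : C.Hom q q) (f : C.Hom p q), C.comp f β = f → β = C.id q

/-- An updown category is unilateral if all automorphism groups are trivial. -/
def Unilateral (C : UpdownData) : Prop :=
  ∀ (p : C.Obj) (f : C.Hom p p), f = C.id p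

/-- An updown category is simple if there is at most one morphism between any
two objects and morphisms factor uniquely into rank-1 steps (so the object at
each intermediate rank in a factorization is unique). -/
def SimpleUD (C : UpdownData) : Prop :=
  (∀ p q : C.Obj, Subsingleton (C.Hom p q)) ∧
  (∀ (p q : C.Obj) (f : C.Hom p q) (k : ℕ), C.rank p < k → k < C.rank q →
    ∃! r : C.Obj, C.rank r = k ∧
      ∃ (g : C.Hom p r) (h : C.Hom r q), C.comp g h = f)

end UpdownData

/-! Up and down operators on the free vector space `Obj →₀ ℚ`. -/

namespace UpdownData

variable (C : UpdownData)

/-- `u(p;p') = |Hom(p,p')|/|Aut(p')|` (as a rational number). -/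
noncomputable def uQ (p q : C.Obj) : ℚ :=
  (Nat.card (C.Hom p q) : ℚ) / (Nat.card (C.Hom q q) : ℚ)

/-- `d(p;p') = |Hom(p,p')|/|Aut(p)|` (as a rational number). -/
noncomputable def dQ (p q : C.Obj) : ℚ :=
  (Nat.card (C.Hom p q) : ℚ) / (Nat.card (C.Hom p p) : ℚ)

/-- The free `ℚ`-vector space on the objects of `C`. -/
abbrev Vec := C.Obj →₀ ℚ

/-- `U(p) = Σ_{|p'| = |p|+1} u(p;p')·p'`. -/
noncomputable def Uvec (p : C.Obj) : C.Vec :=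
  ∑ q ∈ C.level (C.rank p + 1), C.uQ p q • Finsupp.single q 1

/-- `D(p) = Σ_{|p''| = |p|-1} d(p'';p)·p''`, and `D(0̂) = 0`. -/
noncomputable def Dvec (p : C.Obj) : C.Vec :=
  if C.rank p = 0 then 0
  else ∑ q ∈ C.level (C.rank p - 1), C.dQ q p • Finsupp.single q 1

/-- The up operator. -/
noncomputable def Uop : C.Vec →ₗ[ℚ] C.Vec :=
  Finsupp.lsum ℚ fun p => LinearMap.toSpanSingleton ℚ C.Vec (C.Uvec p)

/-- The down operator. -/
noncomputable def Dop : C.Vec →ₗ[ℚ] C.Vec :=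
  Finsupp.lsum ℚ fun p => LinearMap.toSpanSingleton ℚ C.Vec (C.Dvec p)

/-- The inner product with `⟨p,p⟩ = |Aut(p)|` on basis elements. -/
noncomputable def innerUD (x y : C.Vec) : ℚ :=
  x.sum fun p c => c * y p * (Nat.card (C.Hom p p) : ℚ)

/-- The commutator `DU - UD`. -/
noncomputable def commDU : C.Vec →ₗ[ℚ] C.Vec :=
  C.Dop ∘ₗ C.Uop - C.Uop ∘ₗ C.Dop

/-- Extended multiplicity `u(p;q)`: the coefficient of `q` in
`U^{|q|-|p|}(p)`, i.e. `⟨U^{|q|-|p|}(p), q⟩ / |Aut q|`. -/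
noncomputable def uext (p q : C.Obj) : ℚ :=
  ((C.Uop ^ (C.rank q - C.rank p)) (Finsupp.single p 1)) q

/-- Extended multiplicity `d(p;q)`: the coefficient of `p` in
`D^{|q|-|p|}(q)`. -/
noncomputable def dext (p q : C.Obj) : ℚ :=
  ((C.Dop ^ (C.rank q - C.rank p)) (Finsupp.single q 1)) p

/-- The weak commutation condition with eigenvalue function `ε`:
every object is an eigenvector of `DU - UD`. -/
def WCC (ε : C.Obj → ℚ) : Prop :=
  ∀ p : C.Obj, C.commDU (Finsupp.single p 1) = ε p • Finsupp.single p 1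

/-- The sequential commutation condition: `DU - UD` acts as the scalar `r i`
on rank `i`. -/
def SCC (r : ℕ → ℚ) : Prop :=
  ∀ p : C.Obj, C.commDU (Finsupp.single p 1) = r (C.rank p) • Finsupp.single p 1

end UpdownData

namespace UpdownData

variable (C : UpdownData)

lemma Uop_single (p : C.Obj) : C.Uop (Finsupp.single p 1) = C.Uvec p := by
  rw [Uop, Finsupp.lsum_single, LinearMap.toSpanSingleton_apply, one_smul]

lemma Dop_single (p : C.Obj) : C.Dop (Finsupp.single p 1) = C.Dvec p := by
  rw [Dop, Finsupp.lsum_single, LinearMap.toSpanSingleton_apply, one_smul]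

lemma decomp (x : C.Vec) : x = ∑ q ∈ x.support, x q • Finsupp.single q 1 := by
  conv_lhs => rw [← Finsupp.sum_single x]
  rw [Finsupp.sum]
  refine Finset.sum_congr rfl fun q _ => ?_
  rw [Finsupp.smul_single', mul_one]

lemma Uvec_apply_eq_zero (hC : C.IsUpdownCat) (p q : C.Obj)
    (h : C.rank q ≠ C.rank p + 1) : C.Uvec p q = 0 := by
  classical
  rw [Uvec, Finsupp.finset_sum_apply]
  refine Finset.sum_eq_zero fun q' hq' => ?_
  rw [Finsupp.smul_apply, Finsupp.single_apply]
  have : q' ≠ q := fun e => h (e ▸ (hC.mem_level _ q').1 hq')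
  rw [if_neg this, smul_zero]

lemma Uop_support (hC : C.IsUpdownCat) (n : ℕ) (x : C.Vec)
    (hx : ∀ q, x q ≠ 0 → C.rank q = n) :
    ∀ q, (C.Uop x) q ≠ 0 → C.rank q = n + 1 := by
  intro q hq
  by_contra hne
  apply hq
  conv_lhs => rw [C.decomp x]
  rw [map_sum, Finsupp.finset_sum_apply]
  refine Finset.sum_eq_zero fun q' hq' => ?_
  rw [map_smul, Uop_single, Finsupp.smul_apply]
  rw [C.Uvec_apply_eq_zero hC q' q, smul_zero]
  rw [hx q' (Finsupp.mem_support_iff.mp hq')]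
  exact hne

lemma Upow_support (hC : C.IsUpdownCat) (n : ℕ) :
    ∀ q, ((C.Uop ^ n) (Finsupp.single C.zero 1)) q ≠ 0 → C.rank q = n := by
  induction n with
  | zero =>
    intro q hq
    classical
    rw [pow_zero, Module.End.one_apply, Finsupp.single_apply] at hq
    by_cases h : C.zero = q
    · rw [← h]; exact hC.rank_zero
    · exact absurd (if_neg h) hq
  | succ n ih =>
    intro q hq
    rw [pow_succ', Module.End.mul_apply] at hq
    exact C.Uop_support hC n _ ih q hq

lemma commDU_eigen (r : ℕ → ℚ) (hS : C.SCC r) (n : ℕ) (x : C.Vec)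
    (hx : ∀ q, x q ≠ 0 → C.rank q = n) :
    C.Dop (C.Uop x) = C.Uop (C.Dop x) + r n • x := by
  have h1 : C.commDU x = r n • x := by
    conv_lhs => rw [C.decomp x]
    rw [map_sum]
    conv_rhs => rw [C.decomp x]
    rw [Finset.smul_sum]
    refine Finset.sum_congr rfl fun q hq => ?_
    rw [map_smul, hS q, hx q (Finsupp.mem_support_iff.mp hq), smul_comm]
  have h3 : C.commDU x = C.Dop (C.Uop x) - C.Uop (C.Dop x) := by
    rw [commDU, LinearMap.sub_apply, LinearMap.comp_apply, LinearMap.comp_apply]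
  rw [h3] at h1
  linear_combination (norm := module) h1

lemma Dop_zero (hC : C.IsUpdownCat) : C.Dop (Finsupp.single C.zero 1) = 0 := by
  rw [Dop_single, Dvec, if_pos hC.rank_zero]

lemma DU_pow (hC : C.IsUpdownCat) (r : ℕ → ℚ) (hS : C.SCC r) (n : ℕ) :
    C.Dop ((C.Uop ^ (n + 1)) (Finsupp.single C.zero 1)) =
      (∑ j ∈ Finset.range (n + 1), r j) • (C.Uop ^ n) (Finsupp.single C.zero 1) := by
  have h0 : ∀ q, (Finsupp.single C.zero 1 : C.Vec) q ≠ 0 → C.rank q = 0 := by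
    intro q hq
    classical
    rw [Finsupp.single_apply] at hq
    by_cases h : C.zero = q
    · rw [← h]; exact hC.rank_zero
    · exact absurd (if_neg h) hq
  induction n with
  | zero =>
    rw [pow_one, C.commDU_eigen r hS 0 _ h0, C.Dop_zero hC, map_zero, zero_add,
      Finset.sum_range_one, pow_zero, Module.End.one_apply]
  | succ n ih =>
    rw [pow_succ', Module.End.mul_apply,
      C.commDU_eigen r hS (n + 1) _ (C.Upow_support hC (n + 1)), ih,
      map_smul, ← Module.End.mul_apply, ← pow_succ', Finset.sum_range_succ r (n + 1),
      add_smul]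

lemma Dpow_Upow (hC : C.IsUpdownCat) (r : ℕ → ℚ) (hS : C.SCC r) (k a : ℕ) :
    (C.Dop ^ a) ((C.Uop ^ (k + a)) (Finsupp.single C.zero 1)) =
      (∏ i ∈ Finset.range a, ∑ j ∈ Finset.range (k + i + 1), r j) •
        (C.Uop ^ k) (Finsupp.single C.zero 1) := by
  induction a with
  | zero => simp
  | succ a ih =>
    rw [pow_succ, Module.End.mul_apply, show k + (a + 1) = (k + a) + 1 from rfl,
      C.DU_pow hC r hS (k + a), map_smul, ih, smul_smul,
      Finset.prod_range_succ, mul_comm, show k + a + 1 = k + (a + 1) from rfl]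

end UpdownData

open UpdownData in
/-- under the sequential commutation condition with scalars
`r_i`, for `p` of rank `k` and any `a ≥ 0`,
`Σ_{|q|=k+a} d(p;q)·u(0̂;q) = u(0̂;p)·Π_{i=0}^{a-1}(r_0 + ⋯ + r_{k+i})`. -/
theorem updown_scc_sum_formula (C : UpdownData) (hC : C.IsUpdownCat)
    (r : ℕ → ℚ) (hS : C.SCC r) (p : C.Obj) (a : ℕ) :
    ∑ q ∈ C.level (C.rank p + a), C.dext p q * C.uext C.zero q =
      C.uext C.zero p *
        ∏ i ∈ Finset.range a, ∑ j ∈ Finset.range (C.rank p + i + 1), r j := by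
  set k := C.rank p with hk
  set w : C.Vec := (C.Uop ^ (k + a)) (Finsupp.single C.zero 1) with hw
  have hws : ∀ q, w q ≠ 0 → C.rank q = k + a := C.Upow_support hC (k + a)
  -- LHS = ((D^a) w) p
  have key : ∑ q ∈ C.level (k + a), C.dext p q * C.uext C.zero q
      = ((C.Dop ^ a) w) p := by
    have hsub : w.support ⊆ C.level (k + a) := fun q hq =>
      (hC.mem_level _ q).2 (hws q (Finsupp.mem_support_iff.mp hq))
    conv_rhs => rw [C.decomp w]
    rw [map_sum, Finsupp.finset_sum_apply,
      Finset.sum_subset hsub (by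
        intro q _ hq
        rw [map_smul, Finsupp.smul_apply,
          Finsupp.notMem_support_iff.mp hq, zero_smul])]
    refine Finset.sum_congr rfl fun q hq => ?_
    have hrq : C.rank q = k + a := (hC.mem_level _ q).1 hq
    rw [map_smul, Finsupp.smul_apply, dext, uext, hC.rank_zero, hrq, ← hk,
      Nat.sub_zero, Nat.add_sub_cancel_left, smul_eq_mul, mul_comm]
  rw [key, hw, C.Dpow_Upow hC r hS k a, Finsupp.smul_apply, uext,
    hC.rank_zero, Nat.sub_zero, ← hk, smul_eq_mul, mul_comm]
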